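/- For every 0 ≤ t < n and every safe history h of length t+1, er(h, π) = r(h) + ∑_{s ∈ C} T (h t) (π h) s · er(h⌢s, π), where h⌢s denotes the history of length t+2 obtained by appending the state s to h. -/

import Mathlib

open Finset
open scoped Classical

noncomputable section

/-- The restriction of a trajectory `τ : Fin (n+1) → S` to its first `t+1` entries. -/
def pre {S : Type*} {n : ℕ} (τ : Fin (n + 1) → S) (t : ℕ) (ht : t + 1 ≤ n + 1) :
    Fin (t + 1) → S :=
  fun i => τ (Fin.castLE ht i)

/-- The immediate risk of a history `h` of length `t+1`. -/
def risk {S A : Type*} [Fintype S] (T : S → A → S → ℝ) (C : Set S)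
    (π : (t : ℕ) → (Fin (t + 1) → S) → A) {t : ℕ} (h : Fin (t + 1) → S) : ℝ :=
  ∑ s' ∈ univ.filter (fun s' => s' ∉ C), T (h (Fin.last t)) (π t h) s'

/-- The conditional probability of trajectory `τ` from step `t` on:
`p_t(τ) = ∏_{i=t}^{n-1} T (τ i) (π (prefix_i τ)) (τ (i+1))`. -/
def probFrom {S A : Type*} {n : ℕ} (T : S → A → S → ℝ)
    (π : (t : ℕ) → (Fin (t + 1) → S) → A) (t : ℕ) (τ : Fin (n + 1) → S) : ℝ :=
  ∏ i ∈ univ.filter (fun i : Fin n => t ≤ (i : ℕ)),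
    T (τ i.castSucc) (π i (pre τ i (Nat.succ_le_succ i.isLt.le))) (τ i.succ)

/-- The execution risk of the policy `π` after the safe history `h` of length `t+1`:
one minus the conditional probability of the safe trajectories extending `h`. -/
def erHist {S A : Type*} [Fintype S] (n : ℕ) (T : S → A → S → ℝ) (C : Set S)
    (π : (t : ℕ) → (Fin (t + 1) → S) → A) {t : ℕ} (ht : t + 1 ≤ n + 1)
    (h : Fin (t + 1) → S) : ℝ :=
  1 - ∑ τ ∈ univ.filter (fun τ : Fin (n + 1) → S =>
        (∀ i, τ i ∈ C) ∧ pre τ t ht = h), probFrom T π t τ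

/-!
Splitting off the first factor of `p_t(τ)` and grouping the safe trajectories extending `h`
by their state at step `t+1` gives
`∑ {p_t(τ) : τ ⊒ h safe} = ∑_{s ∈ C} T (h t) (π h) s · ∑ {p_{t+1}(τ) : τ ⊒ h⌢s safe}`,
since no safe trajectory passes through `s ∉ C`. Combined with `r(h) + ∑_{s ∈ C} T (h t) (π h) s = 1`
this is the recursion, after writing each execution risk as one minus such a sum.
-/

def safeMass {S A : Type*} [Fintype S] (n : ℕ) (T : S → A → S → ℝ) (C : Set S)
    (π : (t : ℕ) → (Fin (t + 1) → S) → A) {t : ℕ} (ht : t + 1 ≤ n + 1)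
    (h : Fin (t + 1) → S) : ℝ :=
  ∑ τ ∈ univ.filter (fun τ : Fin (n + 1) → S => (∀ i, τ i ∈ C) ∧ pre τ t ht = h),
    probFrom T π t τ

section

variable {S A : Type*} {n : ℕ} (T : S → A → S → ℝ) (π : (t : ℕ) → (Fin (t + 1) → S) → A)

lemma probFrom_eq_mul_probFrom_succ {t : ℕ} (ht : t < n) (τ : Fin (n + 1) → S) :
    probFrom T π t τ
      = T (τ ⟨t, ht.trans_le n.le_succ⟩) (π t (pre τ t (Nat.succ_le_succ ht.le)))
          (τ ⟨t + 1, Nat.succ_lt_succ ht⟩) * probFrom T π (t + 1) τ := by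
  have hfilter : univ.filter (fun i : Fin n => t ≤ (i : ℕ))
      = insert ⟨t, ht⟩ (univ.filter (fun i : Fin n => t + 1 ≤ (i : ℕ))) := by
    ext i
    simp only [mem_filter, mem_univ, true_and, mem_insert, Fin.ext_iff]
    omega
  rw [probFrom, hfilter, prod_insert (by simp)]
  rfl

omit T π in
lemma pre_succ_eq_snoc_iff {t : ℕ} (ht : t < n) (τ : Fin (n + 1) → S)
    (h : Fin (t + 1) → S) (s : S) :
    pre τ (t + 1) (Nat.succ_le_succ ht) = Fin.snoc h s
      ↔ pre τ t (Nat.succ_le_succ ht.le) = h ∧ τ ⟨t + 1, Nat.succ_lt_succ ht⟩ = s := by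
  rw [funext_iff, Fin.forall_fin_succ', Fin.snoc_last, funext_iff]
  simp only [Fin.snoc_castSucc]
  rfl

variable [Fintype S] (C : Set S) (n)

lemma erHist_eq_one_sub_safeMass {t : ℕ} (ht : t + 1 ≤ n + 1) (h : Fin (t + 1) → S) :
    erHist n T C π ht h = 1 - safeMass n T C π ht h :=
  rfl

lemma safeMass_snoc_of_notMem {t : ℕ} (ht : t < n) (h : Fin (t + 1) → S) {s : S}
    (hs : s ∉ C) : safeMass n T C π (Nat.succ_le_succ ht) (Fin.snoc h s) = 0 := by
  refine sum_eq_zero fun τ hτ => absurd ?_ hs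
  obtain ⟨hsafe, hpre⟩ := (mem_filter.mp hτ).2
  exact ((pre_succ_eq_snoc_iff ht τ h s).mp hpre).2 ▸ hsafe _

lemma sum_probFrom_fiber {t : ℕ} (ht : t < n) (h : Fin (t + 1) → S) (s : S) :
    ∑ τ ∈ (univ.filter (fun τ : Fin (n + 1) → S =>
        (∀ i, τ i ∈ C) ∧ pre τ t (Nat.succ_le_succ ht.le) = h)).filter
        (fun τ => τ ⟨t + 1, Nat.succ_lt_succ ht⟩ = s), probFrom T π t τ
      = T (h (Fin.last t)) (π t h) s * safeMass n T C π (Nat.succ_le_succ ht) (Fin.snoc h s) := by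
  have hfiber : (univ.filter (fun τ : Fin (n + 1) → S =>
        (∀ i, τ i ∈ C) ∧ pre τ t (Nat.succ_le_succ ht.le) = h)).filter
        (fun τ => τ ⟨t + 1, Nat.succ_lt_succ ht⟩ = s)
      = univ.filter (fun τ : Fin (n + 1) → S =>
          (∀ i, τ i ∈ C) ∧ pre τ (t + 1) (Nat.succ_le_succ ht) = Fin.snoc h s) := by
    rw [filter_filter]
    refine filter_congr fun τ _ => ?_
    rw [pre_succ_eq_snoc_iff ht, and_assoc]
  rw [hfiber, safeMass, mul_sum]
  refine sum_congr rfl fun τ hτ => ?_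
  obtain ⟨hpre, hlast⟩ := (pre_succ_eq_snoc_iff ht τ h s).mp (mem_filter.mp hτ).2.2
  rw [probFrom_eq_mul_probFrom_succ T π ht τ, hpre, hlast, ← congrFun hpre (Fin.last t)]
  rfl

lemma safeMass_eq_sum_snoc {t : ℕ} (ht : t < n) (h : Fin (t + 1) → S) :
    safeMass n T C π (Nat.succ_le_succ ht.le) h
      = ∑ s ∈ univ.filter (· ∈ C),
          T (h (Fin.last t)) (π t h) s
            * safeMass n T C π (Nat.succ_le_succ ht) (Fin.snoc h s) := by
  rw [safeMass, ← sum_fiberwise_of_maps_to (t := univ)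
    (g := fun τ : Fin (n + 1) → S => τ ⟨t + 1, Nat.succ_lt_succ ht⟩) (fun _ _ => mem_univ _),
    sum_congr rfl fun s _ => sum_probFrom_fiber n T π C ht h s]
  refine (sum_subset (filter_subset _ _) fun s _ hs => ?_).symm
  rw [safeMass_snoc_of_notMem n T π C ht h (by simpa using hs), mul_zero]

omit n in
lemma risk_add_sum_mem (hT1 : ∀ s a, ∑ s', T s a s' = 1) {t : ℕ} (h : Fin (t + 1) → S) :
    risk T C π h + ∑ s ∈ univ.filter (· ∈ C), T (h (Fin.last t)) (π t h) s = 1 := by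
  rw [risk, add_comm, sum_filter_add_sum_filter_not, hT1]

end

theorem er_recursion_general
    {S A : Type*} [Fintype S]
    (n : ℕ)
    (C : Set S)
    (T : S → A → S → ℝ)
    (hT1 : ∀ s a, ∑ s', T s a s' = 1)
    (π : (t : ℕ) → (Fin (t + 1) → S) → A)
    (t : ℕ) (ht : t < n)
    (h : Fin (t + 1) → S) :
    erHist n T C π (Nat.succ_le_succ ht.le) h
      = risk T C π h
        + ∑ s ∈ univ.filter (fun s => s ∈ C),
            T (h (Fin.last t)) (π t h) s
              * erHist n T C π (Nat.succ_le_succ ht) (Fin.snoc h s) := by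
  simp only [erHist_eq_one_sub_safeMass, mul_one_sub, sum_sub_distrib,
    ← safeMass_eq_sum_snoc n T π C ht h]
  linarith [risk_add_sum_mem T π C hT1 h]

/-- The recursive expression for the execution risk used in the proof of Lemma 2 of the
paper: `er(h,π) = r(h) + ∑_{s ∈ C} T (h t) (π h) s · er(h⌢s, π)`. -/
theorem er_recursion
    {S A : Type*} [Fintype S] [Nonempty S] [Fintype A] [Nonempty A]
    (n : ℕ) (hn : 1 ≤ n)
    (C : Set S) (s₀ : S) (hs₀ : s₀ ∈ C)
    (T : S → A → S → ℝ)
    (hT0 : ∀ s a s', 0 ≤ T s a s')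
    (hT1 : ∀ s a, ∑ s', T s a s' = 1)
    (π : (t : ℕ) → (Fin (t + 1) → S) → A)
    (t : ℕ) (ht : t < n)
    (h : Fin (t + 1) → S) (hh0 : h 0 = s₀) (hhsafe : ∀ i, h i ∈ C) :
    erHist n T C π (Nat.succ_le_succ ht.le) h
      = risk T C π h
        + ∑ s ∈ univ.filter (fun s => s ∈ C),
            T (h (Fin.last t)) (π t h) s
              * erHist n T C π (Nat.succ_le_succ ht) (Fin.snoc h s) :=
  er_recursion_general n C T hT1 π t ht h
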